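/- (Spectral norm upper bound, 1D RO case.) Let K ∈ ℝ^{M×C×k}, k odd, S ≥ 1, P = ⌊(k−1)/S⌋·S, M ≤ CS, and N with SN ≥ 2k−1. Then ‖𝒦𝒦ᵀ − I_{MN}‖₂² ≤ (2⌊(k−1)/S⌋ + 1) · M · L_orth(K), where L_orth(K) = ‖CONV(K, K, padding = P, stride = S) − I_{r0}‖_F². -/

import Mathlib

open Matrix BigOperators
open Fin.CommRing

/-- Spectral norm (largest singular value) of a real matrix,
as the operator norm of the induced map between Euclidean spaces. -/
noncomputable def spec {m n : Type*} [Fintype m] [Fintype n] [DecidableEq n]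
    (A : Matrix m n ℝ) : ℝ :=
  ‖(Matrix.toEuclideanLin A).toContinuousLinearMap‖

/-- Squared Frobenius norm of a matrix. -/
def frob2 {m n : Type*} [Fintype m] [Fintype n] (A : Matrix m n ℝ) : ℝ :=
  ∑ i, ∑ j, (A i j) ^ 2

/-- The stride-`S` sampling matrix `S_N ∈ ℝ^{N×SN}`, `(S_N)_{i,j} = 1` iff `j = S·i`. -/
def samp (S N : ℕ) : Matrix (Fin N) (Fin (S * N)) ℝ :=
  Matrix.of fun i j => if (j : ℕ) = S * (i : ℕ) then 1 else 0

/-- Circular embedding `P_n : ℝ^k → ℝ^n` (`k = 2r+1`): places `h j` at position `(r - j) mod n`,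
i.e. `[P_n(h)]_i = h_{r-i}` for `i ∈ [-r,r] mod n`, and `0` otherwise. -/
noncomputable def Pemb (r n : ℕ) [NeZero n] (h : Fin (2*r+1) → ℝ) : Fin n → ℝ :=
  fun i => ∑ j : Fin (2*r+1), if i = (((r : ℤ) - (j : ℤ) : ℤ) : Fin n) then h j else 0

/-- Layer transform matrix `𝒦 ∈ ℝ^{MN×CSN}` of a 1D circular strided convolutional layer
with kernel tensor `K ∈ ℝ^{M×C×k}`: block `(i,j)` is `S_N · C(P_{SN}(K_{i,j}))`. -/
noncomputable def layerMat (M C r S N : ℕ) [NeZero (S*N)]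
    (K : Fin M → Fin C → Fin (2*r+1) → ℝ) :
    Matrix (Fin M × Fin N) (Fin C × Fin (S*N)) ℝ :=
  Matrix.of fun p q =>
    (samp S N * Matrix.circulant (Pemb r (S*N) (K p.1 q.1))) p.2 q.2

/-- `conv(h,g, padding zero = P, stride = S) ∈ ℝ^{2P/S+1}` with `P = ⌊(k-1)/S⌋·S`, `k = 2r+1`:
the strided zero-padded cross-correlation of `h` and `g`. -/
noncomputable def convPS (r S : ℕ) (h g : Fin (2*r+1) → ℝ) :
    Fin (2*((2*r)/S)+1) → ℝ :=
  fun i => ∑ i' : Fin (2*r+1),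
    h i' *
      (if hd : ((2*r)/S)*S ≤ S * (i : ℕ) + (i' : ℕ) ∧
               S * (i : ℕ) + (i' : ℕ) ≤ ((2*r)/S)*S + 2*r
       then g ⟨S * (i : ℕ) + (i' : ℕ) - ((2*r)/S)*S, by omega⟩ else 0)

/-- Circular embedding `Q_{S,N} : ℝ^{2q+1} → ℝ^N` (`q = P/S`): places `x j` at position
`(j - q) mod N`, so the central coordinate `x_q` sits at index `0`. -/
noncomputable def Qemb (q N : ℕ) [NeZero N] (x : Fin (2*q+1) → ℝ) : Fin N → ℝ :=
  fun i => ∑ j : Fin (2*q+1), if i = (((j : ℤ) - (q : ℤ) : ℤ) : Fin N) then x j else 0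

/-- `L_orth` raw sum: `‖CONV(K,K,padding = P, stride = S) − I_{r0}‖_F²`. -/
noncomputable def Lraw (M C r S : ℕ) (K : Fin M → Fin C → Fin (2*r+1) → ℝ) : ℝ :=
  ∑ m : Fin M, ∑ l : Fin M, ∑ t : Fin (2*((2*r)/S)+1),
    ((∑ c : Fin C, convPS r S (K m c) (K l c) t) -
      (if m = l ∧ (t : ℕ) = (2*r)/S then 1 else 0)) ^ 2

/-- `'valid'` boundary single-channel transform matrix `A_N(h) ∈ ℝ^{(N−k+1)×N}`. -/
def validMat (r N : ℕ) (h : Fin (2*r+1) → ℝ) :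
    Matrix (Fin (N - (2*r+1) + 1)) (Fin N) ℝ :=
  Matrix.of fun i j =>
    if hd : (i : ℕ) ≤ (j : ℕ) ∧ (j : ℕ) - (i : ℕ) ≤ 2*r
    then h ⟨(j : ℕ) - (i : ℕ), by omega⟩ else 0

/-- Zero-padding `'same'` single-channel transform matrix `A_N(h) ∈ ℝ^{N×N}`:
`A_N(h)_{i,j} = h_{j−i+r}` when `|j−i| ≤ r`, and `0` otherwise. -/
def sameMat (r N : ℕ) (h : Fin (2*r+1) → ℝ) : Matrix (Fin N) (Fin N) ℝ :=
  Matrix.of fun i j =>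
    if hd : (i : ℕ) ≤ (j : ℕ) + r ∧ (j : ℕ) ≤ (i : ℕ) + r
    then h ⟨(j : ℕ) + r - (i : ℕ), by omega⟩ else 0

lemma fin_intCast_eq_intCast_iff (n : ℕ) [NeZero n] (x y : ℤ) :
    ((x : ℤ) : Fin n) = ((y : ℤ) : Fin n) ↔ (n:ℤ) ∣ (x - y) := by
  cases n with
  | zero => exact absurd rfl (NeZero.ne 0)
  | succ n =>
    have h3 : (((x:ℤ) : Fin (n+1)) = ((y:ℤ) : Fin (n+1))) ↔
        (((x:ℤ) : ZMod (n+1)) = ((y:ℤ) : ZMod (n+1))) := Iff.rfl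
    rw [h3, ZMod.intCast_eq_intCast_iff, Int.modEq_iff_dvd, dvd_sub_comm]

lemma fin_eq_intCast_iff (n : ℕ) [NeZero n] (i : Fin n) (x : ℤ) :
    i = ((x : ℤ) : Fin n) ↔ (n:ℤ) ∣ ((i:ℤ) - x) := by
  have h2 : i = ((((i:ℕ) : ℤ)) : Fin n) := by
    rw [Int.cast_natCast, Fin.cast_val_eq_self]
  conv_lhs => rw [h2]
  rw [fin_intCast_eq_intCast_iff]

lemma ite_sum {α : Type*} [Fintype α] {C : Prop} [Decidable C] (F : α → ℝ) :
    (if C then ∑ a, F a else 0) = ∑ a, if C then F a else 0 := by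
  split <;> simp

lemma sampcirc (S N : ℕ) [NeZero (S*N)] (hS : 0 < S) (v : Fin (S*N) → ℝ) (i : Fin N)
    (s : Fin (S*N)) :
    (samp S N * Matrix.circulant v) i s = v (((S*(i:ℕ) : ℕ) : Fin (S*N)) - s) := by
  have hN : 0 < N := i.pos
  have hlt : S * (i:ℕ) < S * N := by
    exact (Nat.mul_lt_mul_left hS).mpr i.isLt
  have hval : ((S*(i:ℕ) : ℕ) : Fin (S*N)) = ⟨S*(i:ℕ), hlt⟩ := by
    apply Fin.ext; exact Fin.val_cast_of_lt hlt
  rw [Matrix.mul_apply]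
  have : ∀ u : Fin (S*N), samp S N i u * Matrix.circulant v u s
      = if u = ((S*(i:ℕ) : ℕ) : Fin (S*N)) then v (u - s) else 0 := by
    intro u
    rw [hval]
    simp only [samp, Matrix.circulant_apply, Matrix.of_apply, Fin.ext_iff]
    by_cases h : (u:ℕ) = S*(i:ℕ) <;> simp [h]
  simp only [this]
  rw [Finset.sum_ite_eq' Finset.univ]
  simp

lemma Qemb_abs_sum (q N : ℕ) [NeZero N] (hqN : 2*q+1 ≤ N) (x : Fin (2*q+1) → ℝ) :
    ∑ u : Fin N, |Qemb q N x u| = ∑ t, |x t| := by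
  set f : Fin (2*q+1) → Fin N := fun t => (((t:ℤ) - (q:ℤ) : ℤ) : Fin N) with hf
  have hinj : Function.Injective f := by
    intro t t' h
    rw [hf] at h
    simp only at h
    rw [fin_intCast_eq_intCast_iff] at h
    obtain ⟨k, hk⟩ := h
    have h1 : ((t:ℤ) - t') = N * k := by linarith [hk]
    have h2 : ((t:ℤ) - t') = 0 := by
      refine Int.eq_zero_of_abs_lt_dvd ⟨k, h1⟩ ?_
      have := t.isLt; have := t'.isLt
      rw [abs_lt]; omega
    apply Fin.ext; omega
  have hQf : ∀ t, Qemb q N x (f t) = x t := by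
    intro t
    rw [Qemb]
    rw [Finset.sum_eq_single t]
    · rw [if_pos rfl]
    · intro t' _ ht'
      rw [if_neg]; intro h; exact ht' (hinj h).symm
    · intro h; exact absurd (Finset.mem_univ t) h
  have hQ0 : ∀ u : Fin N, u ∉ Finset.univ.image f → Qemb q N x u = 0 := by
    intro u hu
    rw [Qemb]
    apply Finset.sum_eq_zero
    intro t _
    rw [if_neg]
    intro h
    exact hu (Finset.mem_image.mpr ⟨t, Finset.mem_univ t, h.symm⟩)
  rw [← Finset.sum_subset (Finset.subset_univ (Finset.univ.image f))
    (fun u _ hu => by rw [hQ0 u hu, abs_zero])]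
  rw [Finset.sum_image (fun a _ b _ h => hinj h)]
  exact Finset.sum_congr rfl fun t _ => by rw [hQf]

lemma core (r S N : ℕ) [NeZero (S*N)] [NeZero N] (hN : 4*r+1 ≤ S*N)
    (h g : Fin (2*r+1) → ℝ) (i j : Fin N) :
    (∑ s : Fin (S*N), Pemb r (S*N) h (((S*(i:ℕ) : ℕ) : Fin (S*N)) - s) *
        Pemb r (S*N) g (((S*(j:ℕ) : ℕ) : Fin (S*N)) - s))
      = Qemb ((2*r)/S) N (convPS r S h g) (i - j) := by
  have hS : 0 < S := by
    rcases Nat.eq_zero_or_pos S with hS | hS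
    · subst hS; simp at hN
    · exact hS
  set q := (2*r)/S with hq
  have hq1 : q*S ≤ 2*r := Nat.div_mul_le_self (2*r) S
  have hq2 : 2*r < (q+1)*S := (Nat.div_lt_iff_lt_mul hS).mp (Nat.lt_succ_self q)
  have hqN : 2*q+1 ≤ N := by
    have h1 : (2*q)*S < N*S := by nlinarith
    have := lt_of_mul_lt_mul_right h1 (Nat.zero_le S)
    omega
  set wi : Fin (S*N) := ((S*(i:ℕ) : ℕ) : Fin (S*N)) with hwi
  set wj : Fin (S*N) := ((S*(j:ℕ) : ℕ) : Fin (S*N)) with hwj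
  have stepA : (∑ s : Fin (S*N), Pemb r (S*N) h (wi - s) * Pemb r (S*N) g (wj - s))
      = ∑ a : Fin (2*r+1), ∑ b : Fin (2*r+1),
          h a * (if ((S*N:ℕ):ℤ) ∣ ((S:ℤ)*(j:ℕ) - (S:ℤ)*(i:ℕ) + (b:ℤ) - (a:ℤ))
                 then g b else 0) := by
    simp only [Pemb, Finset.sum_mul_sum]
    rw [Finset.sum_comm]
    refine Finset.sum_congr rfl fun a _ => ?_
    rw [Finset.sum_comm]
    refine Finset.sum_congr rfl fun b _ => ?_
    have hcond : ∀ s : Fin (S*N),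
        (wi - s = (((r:ℤ) - (a:ℤ) : ℤ) : Fin (S*N)))
          = (s = wi - (((r:ℤ) - (a:ℤ) : ℤ) : Fin (S*N))) := by
      intro s
      apply propext
      constructor
      · intro hh; rw [← hh]; exact (sub_sub_cancel wi s).symm
      · intro hh; rw [hh, sub_sub_cancel]
    simp only [hcond, ite_mul, zero_mul]
    rw [Finset.sum_ite_eq' Finset.univ]
    simp only [Finset.mem_univ, if_true]
    congr 1
    have e1 : wj - (wi - (((r:ℤ) - (a:ℤ) : ℤ) : Fin (S*N)))
        = ((((S*(j:ℕ) : ℕ) : ℤ) - ((S*(i:ℕ) : ℕ) : ℤ) + ((r:ℤ) - (a:ℤ)) : ℤ) : Fin (S*N)) := by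
      rw [hwi, hwj]
      push_cast
      ring
    rw [e1]
    have e2 := fin_intCast_eq_intCast_iff (S*N)
      (((S*(j:ℕ) : ℕ) : ℤ) - ((S*(i:ℕ) : ℕ) : ℤ) + ((r:ℤ) - (a:ℤ))) ((r:ℤ) - (b:ℤ))
    have e3 : (((S*(j:ℕ) : ℕ) : ℤ) - ((S*(i:ℕ) : ℕ) : ℤ) + ((r:ℤ) - (a:ℤ))) - ((r:ℤ) - (b:ℤ))
        = (S:ℤ)*(j:ℕ) - (S:ℤ)*(i:ℕ) + (b:ℤ) - (a:ℤ) := by push_cast; ring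
    rw [e3] at e2
    exact if_congr e2 rfl rfl
  have stepB : Qemb q N (convPS r S h g) (i - j)
      = ∑ a : Fin (2*r+1), ∑ t : Fin (2*q+1),
          h a * (if ((N:ℕ):ℤ) ∣ (((i:ℕ):ℤ) - ((j:ℕ):ℤ) - (t:ℤ) + (q:ℤ))
                 then (if hd : q*S ≤ S * (t : ℕ) + (a : ℕ) ∧
                          S * (t : ℕ) + (a : ℕ) ≤ q*S + 2*r
                       then g ⟨S * (t : ℕ) + (a : ℕ) - q*S, by omega⟩ else 0)
                 else 0) := by
    have hij : i - j = ((((i:ℕ):ℤ) - ((j:ℕ):ℤ) : ℤ) : Fin N) := by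
      push_cast [Fin.cast_val_eq_self]
      rfl
    have hC2 : ∀ t : Fin (2*q+1),
        (i - j = (((t:ℤ) - (q:ℤ) : ℤ) : Fin N))
          = ((N:ℤ) ∣ (((i:ℕ):ℤ) - ((j:ℕ):ℤ) - (t:ℤ) + (q:ℤ))) := by
      intro t
      apply propext
      rw [hij, fin_intCast_eq_intCast_iff]
      have e3 : (((i:ℕ):ℤ) - ((j:ℕ):ℤ)) - ((t:ℤ) - (q:ℤ))
          = ((i:ℕ):ℤ) - ((j:ℕ):ℤ) - (t:ℤ) + (q:ℤ) := by ring
      rw [e3]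
    simp only [Qemb, convPS, hC2, ite_sum]
    rw [Finset.sum_comm]
    simp only [mul_ite, mul_zero]
    rfl
  rw [stepA, stepB]
  refine Finset.sum_congr rfl fun a _ => ?_
  rw [← Finset.mul_sum, ← Finset.mul_sum]
  congr 1
  have hS' : (0:ℤ) < S := by exact_mod_cast hS
  have h2r : (2*(r:ℤ)) < ((q:ℤ)+1)*S := by exact_mod_cast hq2
  have hq1' : (q:ℤ)*S ≤ 2*r := by exact_mod_cast hq1
  have hSN : (4*(r:ℤ)+1) ≤ ((S*N:ℕ):ℤ) := by exact_mod_cast hN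
  have hqN' : (2*(q:ℤ)+1) ≤ (N:ℤ) := by exact_mod_cast hqN
  by_cases hA : ∃ b : Fin (2*r+1),
      ((S*N:ℕ):ℤ) ∣ ((S:ℤ)*(j:ℕ) - (S:ℤ)*(i:ℕ) + (b:ℤ) - (a:ℤ))
  · obtain ⟨b, k, hk⟩ := hA
    push_cast at hk
    set m : ℤ := (N:ℤ)*k + ((i:ℕ):ℤ) - ((j:ℕ):ℤ) with hmdef
    have hbm : (b:ℤ) - (a:ℤ) = (S:ℤ) * m := by rw [hmdef]; linear_combination hk
    have ha2 : (a:ℤ) ≤ 2*r := by have := a.isLt; omega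
    have hb2 : (b:ℤ) ≤ 2*r := by have := b.isLt; omega
    have ha0 : (0:ℤ) ≤ a := by positivity
    have hb0 : (0:ℤ) ≤ b := by positivity
    have hmle : m ≤ (q:ℤ) := by
      by_contra hc
      push_neg at hc
      have h1 : ((q:ℤ)+1)*S ≤ m*S := by
        apply mul_le_mul_of_nonneg_right (by omega) (le_of_lt hS')
      have h2 : (S:ℤ)*m = m*S := mul_comm _ _
      linarith
    have hmge : -(q:ℤ) ≤ m := by
      by_contra hc
      push_neg at hc
      have h1 : m*S ≤ (-(q:ℤ)-1)*S := by
        apply mul_le_mul_of_nonneg_right (by omega) (le_of_lt hS')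
      have h2 : (S:ℤ)*m = m*S := mul_comm _ _
      nlinarith
    set tn : ℕ := (m + q).toNat with htndef
    have htn : (tn:ℤ) = m + q := Int.toNat_of_nonneg (by omega)
    have htlt : tn < 2*q+1 := by omega
    have hL : (∑ b' : Fin (2*r+1),
        if ((S*N:ℕ):ℤ) ∣ ((S:ℤ)*(j:ℕ) - (S:ℤ)*(i:ℕ) + (b':ℤ) - (a:ℤ)) then g b' else 0)
        = g b := by
      rw [Finset.sum_eq_single b]
      · rw [if_pos ⟨k, by push_cast; linarith [hk]⟩]
      · intro b' _ hne
        rw [if_neg]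
        intro hd'
        have hdb : ((S*N:ℕ):ℤ) ∣ ((S:ℤ)*(j:ℕ) - (S:ℤ)*(i:ℕ) + (b:ℤ) - (a:ℤ)) :=
          ⟨k, by push_cast; linarith [hk]⟩
        have hdiff := dvd_sub hd' hdb
        rw [show ((S:ℤ)*(j:ℕ) - (S:ℤ)*(i:ℕ) + (b':ℤ) - (a:ℤ))
            - ((S:ℤ)*(j:ℕ) - (S:ℤ)*(i:ℕ) + (b:ℤ) - (a:ℤ)) = (b':ℤ) - b from by ring] at hdiff
        have h0 : (b':ℤ) - b = 0 := by
          refine Int.eq_zero_of_abs_lt_dvd hdiff ?_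
          have := b'.isLt
          rw [abs_lt]
          omega
        exact absurd (Fin.ext (by omega : (b':ℕ) = b)) hne
      · intro hmem
        exact absurd (Finset.mem_univ b) hmem
    have hC2tF : ((N:ℕ):ℤ) ∣ (((i:ℕ):ℤ) - ((j:ℕ):ℤ) - ((tn:ℕ):ℤ) + (q:ℤ)) := by
      refine ⟨-k, ?_⟩
      rw [htn, hmdef]
      ring
    have he : (S:ℤ)*(tn:ℕ) + (a:ℕ) = (q:ℤ)*S + b := by
      rw [htn]
      linear_combination -hbm
    have hRB : q*S ≤ S * tn + (a:ℕ) ∧ S * tn + (a:ℕ) ≤ q*S + 2*r := by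
      constructor
      · have : (q:ℤ)*S ≤ (S:ℤ)*tn + (a:ℕ) := by rw [he]; linarith
        exact_mod_cast this
      · have : (S:ℤ)*tn + (a:ℕ) ≤ (q:ℤ)*S + 2*r := by rw [he]; linarith
        exact_mod_cast this
    have heN : S * tn + (a:ℕ) = q*S + (b:ℕ) := by exact_mod_cast he
    have hR : (∑ t : Fin (2*q+1),
        if ((N:ℕ):ℤ) ∣ (((i:ℕ):ℤ) - ((j:ℕ):ℤ) - ((t:ℕ):ℤ) + (q:ℤ)) then
          (if hd : q*S ≤ S * (t:ℕ) + (a:ℕ) ∧ S * (t:ℕ) + (a:ℕ) ≤ q*S + 2*r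
           then g ⟨S * (t:ℕ) + (a:ℕ) - q*S, by omega⟩ else 0)
        else 0) = g b := by
      rw [Finset.sum_eq_single (⟨tn, htlt⟩ : Fin (2*q+1))]
      · rw [if_pos hC2tF, dif_pos hRB]
        congr 1
        apply Fin.ext
        show S * tn + (a:ℕ) - q*S = (b:ℕ)
        omega
      · intro t' _ hne
        by_cases hC : ((N:ℕ):ℤ) ∣ (((i:ℕ):ℤ) - ((j:ℕ):ℤ) - ((t':ℕ):ℤ) + (q:ℤ))
        · exfalso
          have hdiff := dvd_sub hC hC2tF
          rw [show (((i:ℕ):ℤ) - ((j:ℕ):ℤ) - ((t':ℕ):ℤ) + (q:ℤ))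
              - (((i:ℕ):ℤ) - ((j:ℕ):ℤ) - ((tn:ℕ):ℤ) + (q:ℤ))
              = ((tn:ℕ):ℤ) - ((t':ℕ):ℤ) from by ring] at hdiff
          have h0 : ((tn:ℕ):ℤ) - ((t':ℕ):ℤ) = 0 := by
            refine Int.eq_zero_of_abs_lt_dvd hdiff ?_
            have := t'.isLt
            rw [abs_lt]
            omega
          exact hne (Fin.ext (by omega : (t':ℕ) = tn))
        · rw [if_neg hC]
      · intro hmem
        exact absurd (Finset.mem_univ _) hmem
    rw [hL, hR]
  · push_neg at hA
    rw [Finset.sum_eq_zero (fun b _ => if_neg (hA b)), Finset.sum_eq_zero]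
    intro t _
    by_cases hC : ((N:ℕ):ℤ) ∣ (((i:ℕ):ℤ) - ((j:ℕ):ℤ) - ((t:ℕ):ℤ) + (q:ℤ))
    · rw [if_pos hC]
      by_cases hB : q*S ≤ S * (t:ℕ) + (a:ℕ) ∧ S * (t:ℕ) + (a:ℕ) ≤ q*S + 2*r
      · exfalso
        obtain ⟨k', hk'⟩ := hC
        refine hA ⟨S * (t:ℕ) + (a:ℕ) - q*S, by omega⟩ ⟨-k', ?_⟩
        have hv : (((⟨S * (t:ℕ) + (a:ℕ) - q*S, by omega⟩ : Fin (2*r+1)) : ℕ) : ℤ)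
            = (S:ℤ)*(t:ℕ) + ((a:ℕ):ℤ) - (q:ℤ)*S := by
          show ((S * (t:ℕ) + (a:ℕ) - q*S : ℕ) : ℤ) = _
          have := hB.1
          push_cast [this]
          ring
        rw [hv]
        push_cast
        push_cast at hk'
        linear_combination (-(S:ℤ)) * hk'
      · rw [dif_neg hB]
    · rw [if_neg hC]

lemma Qemb_sub (q N : ℕ) [NeZero N] (X Y : Fin (2*q+1) → ℝ) (u : Fin N) :
    Qemb q N (fun t => X t - Y t) u = Qemb q N X u - Qemb q N Y u := by
  simp only [Qemb, ← Finset.sum_sub_distrib]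
  exact Finset.sum_congr rfl fun t _ => by split <;> simp

lemma Qemb_sum (q N C : ℕ) [NeZero N] (F : Fin C → Fin (2*q+1) → ℝ) (u : Fin N) :
    Qemb q N (fun t => ∑ c, F c t) u = ∑ c, Qemb q N (F c) u := by
  simp only [Qemb]
  rw [Finset.sum_comm]
  exact Finset.sum_congr rfl fun t _ => by split <;> simp

lemma Qemb_delta (q N : ℕ) [NeZero N] (hqN : 2*q+1 ≤ N) (P : Prop) [Decidable P]
    (i j : Fin N) :
    Qemb q N (fun t => if P ∧ (t:ℕ) = q then 1 else 0) (i - j)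
      = if P ∧ i = j then 1 else 0 := by
  rw [Qemb]
  rw [Finset.sum_eq_single (⟨q, by omega⟩ : Fin (2*q+1))]
  · have h0 : (((((⟨q, by omega⟩ : Fin (2*q+1)):ℕ):ℤ) - (q:ℤ) : ℤ) : Fin N) = 0 := by
      show ((((q:ℕ):ℤ) - (q:ℤ) : ℤ) : Fin N) = 0
      rw [sub_self, Int.cast_zero]
    rw [h0]
    have h1 : ((⟨q, by omega⟩ : Fin (2*q+1)) : ℕ) = q := rfl
    rw [h1]
    simp only [if_pos rfl, and_true]
    by_cases hij : i = j
    · rw [if_pos (by rw [hij, sub_self])]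
      simp [hij]
    · rw [if_neg (fun hc => hij (sub_eq_zero.mp hc))]
      by_cases hP : P
      · simp [hP, hij]
      · simp [hP]
  · intro t _ hne
    have : ¬ (P ∧ (t:ℕ) = q) := by
      rintro ⟨-, h⟩
      exact hne (Fin.ext h)
    rw [if_neg this]
    split <;> rfl
  · intro hmem
    exact absurd (Finset.mem_univ _) hmem

noncomputable def Efun (M C r S : ℕ) (K : Fin M → Fin C → Fin (2*r+1) → ℝ)
    (m l : Fin M) : Fin (2*((2*r)/S)+1) → ℝ :=
  fun t => (∑ c : Fin C, convPS r S (K m c) (K l c) t) -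
      (if m = l ∧ (t : ℕ) = (2*r)/S then 1 else 0)

lemma entry_eq (M C r S N : ℕ) [NeZero (S*N)] [NeZero N] (hN : 4*r+1 ≤ S*N)
    (K : Fin M → Fin C → Fin (2*r+1) → ℝ) (m l : Fin M) (i j : Fin N) :
    ((layerMat M C r S N K * (layerMat M C r S N K)ᵀ - 1 :
        Matrix (Fin M × Fin N) (Fin M × Fin N) ℝ)) (m, i) (l, j)
      = Qemb ((2*r)/S) N (Efun M C r S K m l) (i - j) := by
  have hS : 0 < S := by
    rcases Nat.eq_zero_or_pos S with hS | hS
    · subst hS; simp at hN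
    · exact hS
  have hq1 : ((2*r)/S)*S ≤ 2*r := Nat.div_mul_le_self (2*r) S
  have hqN : 2*((2*r)/S)+1 ≤ N := by
    have h1 : (2*((2*r)/S))*S < N*S := by nlinarith
    have := lt_of_mul_lt_mul_right h1 (Nat.zero_le S)
    omega
  rw [Matrix.sub_apply, Matrix.one_apply]
  rw [Matrix.mul_apply]
  have hmul : (∑ cs : Fin C × Fin (S*N),
      layerMat M C r S N K (m, i) cs * (layerMat M C r S N K)ᵀ cs (l, j))
      = ∑ c : Fin C, Qemb ((2*r)/S) N (convPS r S (K m c) (K l c)) (i - j) := by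
    rw [Fintype.sum_prod_type]
    refine Finset.sum_congr rfl fun c _ => ?_
    rw [← core r S N hN (K m c) (K l c) i j]
    refine Finset.sum_congr rfl fun s _ => ?_
    congr 1
    · show (samp S N * Matrix.circulant (Pemb r (S*N) (K m c))) i s = _
      rw [sampcirc S N hS]
    · show (samp S N * Matrix.circulant (Pemb r (S*N) (K l c))) j s = _
      rw [sampcirc S N hS]
  rw [hmul]
  unfold Efun
  rw [Qemb_sub ((2*r)/S) N
    (fun t => ∑ c : Fin C, convPS r S (K m c) (K l c) t)
    (fun t => if m = l ∧ (t : ℕ) = (2*r)/S then 1 else 0) (i - j)]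
  rw [Qemb_sum, Qemb_delta ((2*r)/S) N hqN (m = l) i j]
  congr 1
  by_cases hml : (m, i) = (l, j)
  · rw [if_pos hml, if_pos ⟨congrArg Prod.fst hml, congrArg Prod.snd hml⟩]
  · rw [if_neg hml, if_neg (fun ⟨h1, h2⟩ => hml (Prod.ext h1 h2))]

lemma spec_le_of_bounds {ι κ : Type*} [Fintype ι] [Fintype κ] [DecidableEq κ]
    (A : Matrix ι κ ℝ) (c : ℝ) (hc : 0 ≤ c)
    (hrow : ∀ i, ∑ j, |A i j| ≤ c) (hcol : ∀ j, ∑ i, |A i j| ≤ c) :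
    spec A ≤ c := by
  rw [spec]
  apply ContinuousLinearMap.opNorm_le_bound _ hc
  intro x
  have happ : ∀ i, (Matrix.toEuclideanLin A).toContinuousLinearMap x i = ∑ j, A i j * x j := by
    intro i
    simp [Matrix.toEuclideanLin_apply, Matrix.mulVec, dotProduct]
  have key : ∑ i, ((Matrix.toEuclideanLin A).toContinuousLinearMap x i)^2
      ≤ c^2 * ∑ j, (x j)^2 := by
    calc ∑ i, ((Matrix.toEuclideanLin A).toContinuousLinearMap x i)^2
        ≤ ∑ i, (∑ j, |A i j|) * (∑ j, |A i j| * (x j)^2) := by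
          apply Finset.sum_le_sum
          intro i _
          rw [happ i]
          calc (∑ j, A i j * x j)^2 ≤ (∑ j, |A i j| * |x j|)^2 := by
                rw [sq_abs (∑ j, A i j * x j) |>.symm]
                apply pow_le_pow_left₀ (abs_nonneg _)
                refine (Finset.abs_sum_le_sum_abs _ _).trans ?_
                apply le_of_eq; exact Finset.sum_congr rfl fun j _ => abs_mul _ _
            _ ≤ (∑ j, |A i j|) * (∑ j, |A i j| * (x j)^2) := by
                have := Finset.sum_mul_sq_le_sq_mul_sq Finset.univ
                  (fun j => Real.sqrt |A i j|) (fun j => Real.sqrt |A i j| * |x j|)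
                simp only [← mul_assoc, mul_pow, Real.sq_sqrt (abs_nonneg _),
                  Real.mul_self_sqrt (abs_nonneg _), sq_abs] at this
                exact this
      _ ≤ ∑ i, c * (∑ j, |A i j| * (x j)^2) := by
          apply Finset.sum_le_sum; intro i _
          apply mul_le_mul_of_nonneg_right (hrow i)
          positivity
      _ = c * ∑ j, (∑ i, |A i j|) * (x j)^2 := by
          rw [← Finset.mul_sum, Finset.sum_comm]
          congr 1; apply Finset.sum_congr rfl; intro j _
          rw [Finset.sum_mul]
      _ ≤ c * ∑ j, c * (x j)^2 := by
          apply mul_le_mul_of_nonneg_left _ hc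
          apply Finset.sum_le_sum; intro j _
          exact mul_le_mul_of_nonneg_right (hcol j) (sq_nonneg _)
      _ = c^2 * ∑ j, (x j)^2 := by rw [← Finset.mul_sum]; ring
  rw [EuclideanSpace.norm_eq, EuclideanSpace.norm_eq]
  simp only [Real.norm_eq_abs, sq_abs]
  rw [show c * Real.sqrt (∑ j, (x j)^2) = Real.sqrt (c^2 * ∑ j, (x j)^2) by
    rw [Real.sqrt_mul (sq_nonneg c), Real.sqrt_sq hc]]
  exact Real.sqrt_le_sqrt key

/-- spectral norm upper bound, 1D RO case: for `M ≤ CS` and `SN ≥ 2k−1`,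
`‖𝒦𝒦ᵀ − I_{MN}‖₂² ≤ (2⌊(k−1)/S⌋+1) · M · L_orth(K)`. -/
theorem stmt17 (M C r S N : ℕ) [NeZero (S*N)] (hM : M ≤ C*S) (hN : 4*r+1 ≤ S*N)
    (K : Fin M → Fin C → Fin (2*r+1) → ℝ) :
    spec (layerMat M C r S N K * (layerMat M C r S N K)ᵀ - 1) ^ 2
      ≤ (2*((2*r)/S)+1 : ℝ) * (M : ℝ) * Lraw M C r S K := by
  have hS : 0 < S := by
    rcases Nat.eq_zero_or_pos S with hS | hS
    · subst hS; simp at hN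
    · exact hS
  haveI : NeZero N := ⟨by
    intro h
    subst h
    rw [Nat.mul_zero] at hN
    omega⟩
  have hq1 : ((2*r)/S)*S ≤ 2*r := Nat.div_mul_le_self (2*r) S
  have hqN : 2*((2*r)/S)+1 ≤ N := by
    have h1 : (2*((2*r)/S))*S < N*S := by nlinarith
    have := lt_of_mul_lt_mul_right h1 (Nat.zero_le S)
    omega
  set B : Matrix (Fin M × Fin N) (Fin M × Fin N) ℝ :=
    layerMat M C r S N K * (layerMat M C r S N K)ᵀ - 1 with hBdef
  have hLnn : 0 ≤ Lraw M C r S K := by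
    unfold Lraw
    refine Finset.sum_nonneg fun _ _ => Finset.sum_nonneg fun _ _ =>
      Finset.sum_nonneg fun _ _ => sq_nonneg _
  set c : ℝ := Real.sqrt (((2*((2*r)/S)+1 : ℕ):ℝ) * (M:ℝ) * Lraw M C r S K) with hcdef
  have hcnn : 0 ≤ c := Real.sqrt_nonneg _
  have hprodnn : 0 ≤ ((2*((2*r)/S)+1 : ℕ):ℝ) * (M:ℝ) * Lraw M C r S K := by
    apply mul_nonneg (mul_nonneg (Nat.cast_nonneg _) (Nat.cast_nonneg _)) hLnn
  have hcsq : c^2 = ((2*((2*r)/S)+1 : ℕ):ℝ) * (M:ℝ) * Lraw M C r S K :=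
    Real.sq_sqrt hprodnn
  have hCS : ∀ F : Fin M → Fin (2*((2*r)/S)+1) → ℝ,
      (∑ l, ∑ t, (F l t)^2) ≤ Lraw M C r S K → (∑ l, ∑ t, |F l t|) ≤ c := by
    intro F hF
    rw [hcdef, ← Finset.sum_product' (f := fun l t => |F l t|)]
    rw [Real.le_sqrt (Finset.sum_nonneg fun _ _ => abs_nonneg _) hprodnn]
    calc (∑ p ∈ Finset.univ ×ˢ Finset.univ, |F p.1 p.2|) ^ 2
        ≤ (Finset.univ ×ˢ Finset.univ : Finset (Fin M × Fin (2*((2*r)/S)+1))).card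
            * ∑ p ∈ Finset.univ ×ˢ Finset.univ, |F p.1 p.2| ^ 2 :=
          sq_sum_le_card_mul_sum_sq
      _ = ((2*((2*r)/S)+1 : ℕ):ℝ) * (M:ℝ) * ∑ l, ∑ t, (F l t)^2 := by
          rw [Finset.sum_product' (f := fun l t => |F l t| ^ 2)]
          simp only [sq_abs]
          rw [Finset.card_product, Finset.card_univ, Finset.card_univ,
            Fintype.card_fin, Fintype.card_fin]
          push_cast
          ring
      _ ≤ ((2*((2*r)/S)+1 : ℕ):ℝ) * (M:ℝ) * Lraw M C r S K := by
          apply mul_le_mul_of_nonneg_left hF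
          apply mul_nonneg (Nat.cast_nonneg _) (Nat.cast_nonneg _)
  have hentry : ∀ (m l : Fin M) (i j : Fin N),
      B (m, i) (l, j) = Qemb ((2*r)/S) N (Efun M C r S K m l) (i - j) :=
    fun m l i j => entry_eq M C r S N hN K m l i j
  have habs : ∀ (m l : Fin M) (i : Fin N),
      (∑ j : Fin N, |Qemb ((2*r)/S) N (Efun M C r S K m l) (i - j)|)
        = ∑ t, |Efun M C r S K m l t| := by
    intro m l i
    have h1 := Equiv.sum_comp (Equiv.subLeft i)
      (fun u => |Qemb ((2*r)/S) N (Efun M C r S K m l) u|)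
    simp only [Equiv.subLeft_apply] at h1
    rw [h1]
    exact Qemb_abs_sum ((2*r)/S) N hqN _
  have habs' : ∀ (m l : Fin M) (j : Fin N),
      (∑ i : Fin N, |Qemb ((2*r)/S) N (Efun M C r S K m l) (i - j)|)
        = ∑ t, |Efun M C r S K m l t| := by
    intro m l j
    have h1 := Equiv.sum_comp (Equiv.subRight j)
      (fun u => |Qemb ((2*r)/S) N (Efun M C r S K m l) u|)
    simp only [Equiv.subRight_apply] at h1
    rw [h1]
    exact Qemb_abs_sum ((2*r)/S) N hqN _
  have hEnn : ∀ (m' l' : Fin M), 0 ≤ ∑ t, (Efun M C r S K m' l' t)^2 :=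
    fun _ _ => Finset.sum_nonneg fun _ _ => sq_nonneg _
  have hLeq : Lraw M C r S K
      = ∑ m' : Fin M, ∑ l' : Fin M, ∑ t, (Efun M C r S K m' l' t)^2 := rfl
  have hrow : ∀ p : Fin M × Fin N, (∑ p', |B p p'|) ≤ c := by
    rintro ⟨m, i⟩
    have heq : (∑ p' : Fin M × Fin N, |B (m, i) p'|)
        = ∑ l, ∑ t, |Efun M C r S K m l t| := by
      rw [Fintype.sum_prod_type]
      refine Finset.sum_congr rfl fun l _ => ?_
      rw [show (∑ j, |B (m,i) (l,j)|)
          = ∑ j, |Qemb ((2*r)/S) N (Efun M C r S K m l) (i - j)| from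
        Finset.sum_congr rfl fun j _ => by rw [hentry]]
      exact habs m l i
    rw [heq]
    apply hCS
    rw [hLeq]
    exact Finset.single_le_sum (f := fun m' => ∑ l', ∑ t, (Efun M C r S K m' l' t)^2)
      (fun m' _ => Finset.sum_nonneg fun l' _ => hEnn m' l') (Finset.mem_univ m)
  have hcol : ∀ p : Fin M × Fin N, (∑ p', |B p' p|) ≤ c := by
    rintro ⟨l, j⟩
    have heq : (∑ p' : Fin M × Fin N, |B p' (l, j)|)
        = ∑ m, ∑ t, |Efun M C r S K m l t| := by
      rw [Fintype.sum_prod_type]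
      refine Finset.sum_congr rfl fun m _ => ?_
      rw [show (∑ i, |B (m,i) (l,j)|)
          = ∑ i, |Qemb ((2*r)/S) N (Efun M C r S K m l) (i - j)| from
        Finset.sum_congr rfl fun i _ => by rw [hentry]]
      exact habs' m l j
    rw [heq]
    apply hCS
    rw [hLeq]
    apply Finset.sum_le_sum
    intro m' _
    exact Finset.single_le_sum (f := fun l' => ∑ t, (Efun M C r S K m' l' t)^2)
      (fun l' _ => hEnn m' l') (Finset.mem_univ l)
  have hspec : spec B ≤ c := spec_le_of_bounds B c hcnn hrow hcol
  have hspecnn : 0 ≤ spec B := norm_nonneg _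
  calc spec B ^ 2 ≤ c ^ 2 := by
        apply pow_le_pow_left₀ hspecnn hspec
    _ = ((2*((2*r)/S)+1 : ℕ):ℝ) * (M:ℝ) * Lraw M C r S K := hcsq
    _ ≤ (2*((2*r)/S)+1 : ℝ) * (M : ℝ) * Lraw M C r S K := by
        apply mul_le_mul_of_nonneg_right _ hLnn
        apply mul_le_mul_of_nonneg_right _ (Nat.cast_nonneg M)
        have hd : (((2*r)/S : ℕ) : ℝ) ≤ (2*(r:ℝ))/(S:ℝ) := by
          have h := Nat.cast_div_le (α := ℝ) (m := 2*r) (n := S)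
          push_cast at h
          linarith
        push_cast
        linarith
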